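/- arXiv:2403.08166 — 2 statements merged into one kernel-verified Lean document; each statement's English description precedes it below -/
import Mathlib

section
/- Let d ≥ 1 and let ψ : ℝ × ℝ^d → ℝ^d, (t,y) ↦ ψ(t,y), be twice continuously differentiable. Write Ψ(t,y) = D_yψ(t,y) for the spatial Jacobian matrix. Then for every (t,y), ∂_t det(Ψ(t,y)) = div_y( Adj(Ψ(t,·)) ∂_tψ(t,·) )(y), i.e. the time derivative of the Jacobian determinant equals the spatial divergence of the vector field y ↦ Adj(D_yψ(t,y)) ∂_tψ(t,y). -/
/-! By Cramer's rule, the `i`-th component of `Adj(D_yψ) ∂_tψ` is the determinant of `D_yψ` with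
its `i`-th column replaced by `∂_tψ`. Differentiating it in `y_i` column by column, the terms in
which column `i` is differentiated carry `∂_i∂_tψ = ∂_t∂_iψ` there and add up to `∂_t det D_yψ`;
every other term, with `∂_tψ` in column `i` and `∂_i∂_jψ` in column `j`, cancels against the term
for `(j, i)`, since the two matrices differ by a transposition of columns. -/

/-- The (spatial) Jacobian matrix of a map `f : ℝ^d → ℝ^d` at a point `y`:
`(jacobian f y) i j = ∂ f_i / ∂ y_j`. -/
noncomputable def jacobian {d : ℕ} (f : (Fin d → ℝ) → (Fin d → ℝ)) (y : Fin d → ℝ) :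
    Matrix (Fin d) (Fin d) ℝ :=
  Matrix.of fun i j => fderiv ℝ f y (Pi.single j 1) i

/-- The divergence of a vector field `v : ℝ^d → ℝ^d` at a point `y`:
`∑ i, ∂ v_i / ∂ y_i`. -/
noncomputable def vdiv {d : ℕ} (v : (Fin d → ℝ) → (Fin d → ℝ)) (y : Fin d → ℝ) : ℝ :=
  ∑ i, fderiv ℝ (fun z => v z i) y (Pi.single i 1)

open Function Matrix Finset

theorem Function.update_update_comp_swap {α β : Type*} [DecidableEq α] (v : α → β) (b h : β)
    {i j : α} (hij : i ≠ j) :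
    update (update v i b) j h ∘ Equiv.swap i j = update (update v j b) i h := by
  ext k
  rcases eq_or_ne k i with rfl | hki
  · simp
  rcases eq_or_ne k j with rfl | hkj
  · simp [hki, hij]
  · simp [Equiv.swap_apply_of_ne_of_ne hki hkj, hki, hkj]

namespace AlternatingMap

variable {R M N ι : Type*} [Semiring R] [AddCommMonoid M] [Module R M] [AddCommGroup N]
  [Module R N] [DecidableEq ι] (f : M [⋀^ι]→ₗ[R] N)

theorem sum_offDiag_map_update_update_eq_zero (s : Finset ι) (v : ι → M) (b : M)
    {H : ι → ι → M} (hH : ∀ i j, H i j = H j i) :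
    ∑ p ∈ s.offDiag, f (update (update v p.1 b) p.2 (H p.1 p.2)) = 0 := by
  refine sum_involution (fun p _ ↦ p.swap) (fun p hp ↦ ?_) (fun p hp _ ↦ ?_)
    (fun p hp ↦ by grind) (fun p _ ↦ p.swap_swap)
  · have hne : p.1 ≠ p.2 := (mem_offDiag.1 hp).2.2
    rw [Prod.fst_swap, Prod.snd_swap, hH p.2, ← update_update_comp_swap v b _ hne,
      f.map_swap _ hne, add_neg_cancel]
  · exact fun h ↦ (mem_offDiag.1 hp).2.2 (congrArg Prod.snd h)

theorem sum_sum_map_update_update_eq_sum_map_update [Fintype ι] {V : Type*} (L : V → M)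
    {B : V → V → M} (hB : ∀ x y, B x y = B y x) (u : ι → V) (τ : V) :
    ∑ i, ∑ j, f (update (L ∘ update u i τ) j (B (u i) (update u i τ j)))
      = ∑ i, f (update (L ∘ u) i (B τ (u i))) := by
  rw [← sum_product' (f := fun i j ↦ f (update (L ∘ update u i τ) j (B (u i) (update u i τ j)))),
    ← diag_union_offDiag, sum_union (disjoint_diag_offDiag _), sum_diag]
  have hoff : ∑ p ∈ (univ : Finset ι).offDiag,
      f (update (L ∘ update u p.1 τ) p.2 (B (u p.1) (update u p.1 τ p.2))) = 0 := by
    rw [← sum_offDiag_map_update_update_eq_zero f univ (L ∘ u) (L τ)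
      (H := fun i j ↦ B (u i) (u j)) (fun i j ↦ hB _ _)]
    refine sum_congr rfl fun p hp ↦ ?_
    rw [comp_update, update_of_ne (mem_offDiag.1 hp).2.2.symm]
  rw [hoff, add_zero]
  refine sum_congr rfl fun i _ ↦ ?_
  rw [comp_update, update_idem, update_self, hB]

end AlternatingMap

theorem Matrix.adjugate_transpose_mulVec_apply {R n : Type*} [CommRing R] [Fintype n]
    [DecidableEq n] (r : n → n → R) (b : n → R) (i : n) :
    ((of r)ᵀ.adjugate *ᵥ b) i = (of (update r i b)).det := by
  rw [← cramer_eq_adjugate_mulVec, cramer_transpose_apply]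
  rfl

section Calculus

variable {𝕜 : Type*} [NontriviallyNormedField 𝕜] {n : Type*} [Fintype n] [DecidableEq n]
  {G : Type*} [NormedAddCommGroup G] [NormedSpace 𝕜 G]

variable (𝕜 n) in
noncomputable def Matrix.detRowContinuousMultilinear :
    ContinuousMultilinearMap 𝕜 (fun _ : n ↦ n → 𝕜) 𝕜 :=
  { detRowAlternating.toMultilinearMap with cont := continuous_id.matrix_det }

@[simp]
theorem Matrix.detRowContinuousMultilinear_apply (m : n → n → 𝕜) :
    detRowContinuousMultilinear 𝕜 n m = (of m).det :=
  rfl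

theorem fderiv_det_of_apply {r : n → G → n → 𝕜} {r' : n → G →L[𝕜] n → 𝕜} {x : G}
    (hr : ∀ i, HasFDerivAt (r i) (r' i) x) (v : G) :
    fderiv 𝕜 (fun x ↦ (of fun i ↦ r i x).det) x v
      = ∑ i, (of (update (fun j ↦ r j x) i (r' i v))).det := by
  have hdet := HasFDerivAt.multilinear_comp (detRowContinuousMultilinear 𝕜 n) hr
  simp only [detRowContinuousMultilinear_apply] at hdet
  rw [hdet.fderiv]
  simp only [FunLike.coe_sum, Finset.sum_apply, ContinuousLinearMap.coe_comp,
    Function.comp_apply, ContinuousMultilinearMap.toContinuousLinearMap_apply]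
  rfl

variable {V : Type*} [NormedAddCommGroup V] [NormedSpace 𝕜 V]

theorem fderiv_det_fderiv_comp {Φ : V → n → 𝕜} {g : G → V} {g' : G →L[𝕜] V} {x : G}
    (hΦ : DifferentiableAt 𝕜 (fderiv 𝕜 Φ) (g x)) (hg : HasFDerivAt g g' x) (w : n → V) (v : G) :
    fderiv 𝕜 (fun x ↦ (of (fderiv 𝕜 Φ (g x) ∘ w)).det) x v
      = ∑ j, (of (update (fderiv 𝕜 Φ (g x) ∘ w) j
          (fderiv 𝕜 (fderiv 𝕜 Φ) (g x) (g' v) (w j)))).det := by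
  have hrow : ∀ j, HasFDerivAt (fun x ↦ fderiv 𝕜 Φ (g x) (w j))
      (((fderiv 𝕜 (fderiv 𝕜 Φ) (g x)).comp g').flip (w j)) x := fun j ↦ by
    simpa using (hΦ.hasFDerivAt.comp x hg).clm_apply (hasFDerivAt_const (w j) x)
  exact fderiv_det_of_apply hrow v

end Calculus

section Slices

variable {d : ℕ}

theorem jacobian_eq_transpose_fderiv_uncurry {G : Type*} [NormedAddCommGroup G]
    [NormedSpace ℝ G] {ψ : G → (Fin d → ℝ) → (Fin d → ℝ)} {s : G} {z : Fin d → ℝ}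
    (hψ : DifferentiableAt ℝ (fun p : G × (Fin d → ℝ) ↦ ψ p.1 p.2) (s, z)) :
    jacobian (ψ s) z = (of fun j ↦ fderiv ℝ (fun p : G × (Fin d → ℝ) ↦ ψ p.1 p.2) (s, z)
      (0, Pi.single j 1))ᵀ := by
  have h : HasFDerivAt (ψ s) (fderiv ℝ (fun p : G × (Fin d → ℝ) ↦ ψ p.1 p.2) (s, z) ∘L
      ContinuousLinearMap.inr ℝ G (Fin d → ℝ)) z :=
    hψ.hasFDerivAt.comp z (hasFDerivAt_prodMk_right s z)
  ext i j
  simp [jacobian, h.fderiv]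

theorem deriv_apply_eq_fderiv_uncurry {ψ : ℝ → (Fin d → ℝ) → (Fin d → ℝ)} {t : ℝ}
    {z : Fin d → ℝ} (j : Fin d)
    (hψ : DifferentiableAt ℝ (fun p : ℝ × (Fin d → ℝ) ↦ ψ p.1 p.2) (t, z)) :
    deriv (fun s ↦ ψ s z j) t = fderiv ℝ (fun p : ℝ × (Fin d → ℝ) ↦ ψ p.1 p.2) (t, z) (1, 0) j := by
  have h := hψ.hasFDerivAt.comp_hasDerivAt t ((hasDerivAt_id t).prodMk (hasDerivAt_const t z))
  exact (hasDerivAt_pi.mp h j).deriv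

end Slices

theorem deriv_det_jacobian_eq_div_general {d : ℕ}
    (ψ : ℝ → (Fin d → ℝ) → (Fin d → ℝ))
    (hψ : ContDiff ℝ 2 (fun p : ℝ × (Fin d → ℝ) => ψ p.1 p.2)) :
    ∀ (t : ℝ) (y : Fin d → ℝ),
      deriv (fun s => (jacobian (ψ s) y).det) t
        = vdiv (fun z =>
            (Matrix.adjugate (jacobian (ψ t) z)).mulVec
              (fun j => deriv (fun s => ψ s z j) t)) y := by
  intro t y
  set Φ := fun p : ℝ × (Fin d → ℝ) => ψ p.1 p.2
  have hΦ : Differentiable ℝ Φ := hψ.differentiable (by norm_num)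
  have hDΦ : Differentiable ℝ (fderiv ℝ Φ) := (hψ.fderiv_right le_rfl).differentiable one_ne_zero
  have hsymm : IsSymmSndFDerivAt ℝ Φ (t, y) := hψ.contDiffAt.isSymmSndFDerivAt (by simp)
  set u : Fin d → ℝ × (Fin d → ℝ) := fun j ↦ (0, Pi.single j 1)
  set τ : ℝ × (Fin d → ℝ) := (1, 0)
  -- Matrices are built from rows: the row `fderiv ℝ Φ (s, z) (u j)` is the Jacobian column
  -- `∂_jψ`, and `fderiv ℝ Φ (s, z) τ` is `∂_tψ`.
  have hdet : ∀ s, (jacobian (ψ s) y).det = (of (fderiv ℝ Φ (s, y) ∘ u)).det := fun s ↦ by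
    rw [jacobian_eq_transpose_fderiv_uncurry (hΦ _), det_transpose]
    rfl
  have hfield : ∀ i z, ((jacobian (ψ t) z).adjugate *ᵥ fun j ↦ deriv (fun s ↦ ψ s z j) t) i
      = (of (fderiv ℝ Φ (t, z) ∘ update u i τ)).det := fun i z ↦ by
    simp_rw [jacobian_eq_transpose_fderiv_uncurry (hΦ _), deriv_apply_eq_fderiv_uncurry _ (hΦ _),
      adjugate_transpose_mulVec_apply, comp_update]
    rfl
  calc deriv (fun s => (jacobian (ψ s) y).det) t
      = ∑ j, (of (update (fderiv ℝ Φ (t, y) ∘ u) j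
          (fderiv ℝ (fderiv ℝ Φ) (t, y) τ (u j)))).det := by
        simp_rw [hdet]
        exact fderiv_det_fderiv_comp (hDΦ _) (hasFDerivAt_prodMk_left t y) u 1
    _ = ∑ i, ∑ j, (of (update (fderiv ℝ Φ (t, y) ∘ update u i τ) j
          (fderiv ℝ (fderiv ℝ Φ) (t, y) (u i) (update u i τ j)))).det :=
        (detRowAlternating.sum_sum_map_update_update_eq_sum_map_update _ hsymm u τ).symm
    _ = _ := by
        simp_rw [vdiv, hfield]
        refine sum_congr rfl fun i _ ↦ ?_
        exact (fderiv_det_fderiv_comp (hDΦ _) (hasFDerivAt_prodMk_right t y) _ _).symm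

/-- For a twice continuously differentiable evolution `ψ : ℝ × ℝ^d → ℝ^d`, the time
derivative of the Jacobian determinant equals the spatial divergence of the vector field
`y ↦ Adj(D_yψ(t,y)) ∂_tψ(t,y)`. -/
theorem deriv_det_jacobian_eq_div {d : ℕ} (hd : 1 ≤ d)
    (ψ : ℝ → (Fin d → ℝ) → (Fin d → ℝ))
    (hψ : ContDiff ℝ 2 (fun p : ℝ × (Fin d → ℝ) => ψ p.1 p.2)) :
    ∀ (t : ℝ) (y : Fin d → ℝ),
      deriv (fun s => (jacobian (ψ s) y).det) t
        = vdiv (fun z =>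
            (Matrix.adjugate (jacobian (ψ t) z)).mulVec
              (fun j => deriv (fun s => ψ s z j) t)) y :=
  deriv_det_jacobian_eq_div_general ψ hψ
end

section
/- Equality of adjugate-weighted and determinant-weighted averages for divergence-free transformed fields: Let d ≥ 1, let ψ : ℝ^d → ℝ^d be twice continuously differentiable, and let u : ℝ^d → ℝ^d be continuously differentiable with compact support. Assume that the vector field y ↦ Adj(Dψ(y)) u(y) is divergence-free, i.e. div( Adj(Dψ) u )(y) = 0 for all y ∈ ℝ^d. Then ∫_{ℝ^d} Adj(Dψ(y)) u(y) dy = ∫_{ℝ^d} det(Dψ(y)) u(y) dy (equality of vectors in ℝ^d). -/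
/-! The field `v = Adj(Dψ) u` is `C¹`, compactly supported and divergence-free, so integration by
parts gives `∫ DF(y) v(y) dy = -∫ F div v = 0` for every `C¹` map `F`. With `F = id` this says
`∫ v = 0`; with `F = ψ` it says `∫ Dψ v = 0`, and `Dψ Adj(Dψ) = det(Dψ) I` turns `Dψ v` into
`det(Dψ) u`. Both sides therefore vanish. -/

open MeasureTheory

open scoped Matrix

theorem jacobian_mulVec {d : ℕ} (f : (Fin d → ℝ) → (Fin d → ℝ)) (y w : Fin d → ℝ) :
    jacobian f y *ᵥ w = fderiv ℝ f y w :=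
  LinearMap.toMatrix'_mulVec (fderiv ℝ f y : (Fin d → ℝ) →ₗ[ℝ] (Fin d → ℝ)) w

theorem ContinuousLinearMap.apply_eq_sum_apply_single_mul {ι : Type*} [Fintype ι]
    [DecidableEq ι] (L : (ι → ℝ) →L[ℝ] ℝ) (w : ι → ℝ) : L w = ∑ j, L (Pi.single j 1) * w j := by
  conv_lhs => rw [← Finset.univ_sum_single w]
  refine map_sum L _ _ |>.trans <| Finset.sum_congr rfl fun j _ => ?_
  have hsingle : Pi.single j (w j) = w j • Pi.single (M := fun _ => ℝ) j 1 := by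
    rw [← Pi.single_smul', smul_eq_mul, mul_one]
  rw [hsingle, map_smul, smul_eq_mul, mul_comm]

section Regularity

variable {E : Type*} [NormedAddCommGroup E] [NormedSpace ℝ E] {d : ℕ} {n : WithTop ℕ∞}
  {A : E → Matrix (Fin d) (Fin d) ℝ}

theorem contDiff_det_of_contDiff_entries (hA : ∀ i j, ContDiff ℝ n fun z => A z i j) :
    ContDiff ℝ n fun z => (A z).det := by
  simp_rw [Matrix.det_apply, Units.smul_def, zsmul_eq_mul]
  exact ContDiff.sum fun σ _ => contDiff_const.mul (contDiff_prod fun i _ => hA (σ i) i)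

theorem contDiff_adjugate_apply_of_contDiff_entries (hA : ∀ i j, ContDiff ℝ n fun z => A z i j)
    (i j : Fin d) : ContDiff ℝ n fun z => (A z).adjugate i j := by
  simp_rw [Matrix.adjugate_apply]
  refine contDiff_det_of_contDiff_entries fun k l => ?_
  simp_rw [Matrix.updateRow_apply]
  split_ifs
  · exact contDiff_const
  · exact hA k l

theorem contDiff_mulVec_of_contDiff_entries (hA : ∀ i j, ContDiff ℝ n fun z => A z i j)
    {w : E → Fin d → ℝ} (hw : ContDiff ℝ n w) : ContDiff ℝ n fun z => A z *ᵥ w z :=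
  contDiff_pi.2 fun i =>
    show ContDiff ℝ n fun z => ∑ j, A z i j * w z j from
      ContDiff.sum fun j _ => (hA i j).mul (contDiff_pi.1 hw j)

theorem contDiff_jacobian_apply {m : WithTop ℕ∞} {f : (Fin d → ℝ) → Fin d → ℝ}
    (hf : ContDiff ℝ n f) (hmn : m + 1 ≤ n) (i j : Fin d) :
    ContDiff ℝ m fun z => jacobian f z i j :=
  contDiff_pi.1 ((hf.fderiv_right hmn).clm_apply contDiff_const) i

end Regularity

theorem integral_fderiv_apply_eq_zero_of_vdiv_eq_zero {d : ℕ} {f : (Fin d → ℝ) → ℝ}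
    {v : (Fin d → ℝ) → Fin d → ℝ} (hf : ContDiff ℝ 1 f) (hv : ContDiff ℝ 1 v)
    (hvs : HasCompactSupport v) (hdiv : ∀ y, vdiv v y = 0) :
    ∫ y, fderiv ℝ f y (v y) = 0 := by
  have hvj (j : Fin d) : ContDiff ℝ 1 fun z => v z j := contDiff_pi.1 hv j
  have hvsj (j : Fin d) : HasCompactSupport fun z => v z j :=
    hvs.comp_left (g := fun w : Fin d → ℝ => w j) rfl
  have hf' (j : Fin d) : Continuous fun y => fderiv ℝ f y (Pi.single j 1) :=
    (hf.continuous_fderiv one_ne_zero).clm_apply continuous_const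
  have hvj' (j : Fin d) : Continuous fun y => fderiv ℝ (fun z => v z j) y (Pi.single j 1) :=
    ((hvj j).continuous_fderiv one_ne_zero).clm_apply continuous_const
  have hf'v (j : Fin d) : Integrable fun y => fderiv ℝ f y (Pi.single j 1) * v y j :=
    ((hf' j).mul (hvj j).continuous).integrable_of_hasCompactSupport (hvsj j).mul_left
  have hfv' (j : Fin d) : Integrable fun y => f y * fderiv ℝ (fun z => v z j) y (Pi.single j 1) :=
    (hf.continuous.mul (hvj' j)).integrable_of_hasCompactSupport
      ((hvsj j).fderiv_apply ℝ _).mul_left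
  have ibp (j : Fin d) : ∫ y, fderiv ℝ f y (Pi.single j 1) * v y j
      = -∫ y, f y * fderiv ℝ (fun z => v z j) y (Pi.single j 1) := by
    rw [integral_mul_fderiv_eq_neg_fderiv_mul_of_integrable (hf'v j) (hfv' j)
      ((hf.continuous.mul (hvj j).continuous).integrable_of_hasCompactSupport (hvsj j).mul_left)
      (fun x _ => hf.differentiable one_ne_zero x)
      (fun x _ => (hvj j).differentiable one_ne_zero x), neg_neg]
  calc ∫ y, fderiv ℝ f y (v y)
      = ∫ y, ∑ j, fderiv ℝ f y (Pi.single j 1) * v y j :=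
        integral_congr_ae <| .of_forall fun y =>
          (fderiv ℝ f y).apply_eq_sum_apply_single_mul (v y)
    _ = -∫ y, f y * vdiv v y := by
        rw [integral_finsetSum _ fun j _ => hf'v j, Finset.sum_congr rfl fun j _ => ibp j,
          Finset.sum_neg_distrib, ← integral_finsetSum _ fun j _ => hfv' j]
        simp only [vdiv, Finset.mul_sum]
    _ = 0 := by simp [hdiv]

theorem integral_fderiv_apply_eq_zero_of_vdiv_eq_zero_pi {d : ℕ} {ι : Type*} [Fintype ι]
    {F : (Fin d → ℝ) → ι → ℝ} {v : (Fin d → ℝ) → Fin d → ℝ} (hF : ContDiff ℝ 1 F)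
    (hv : ContDiff ℝ 1 v) (hvs : HasCompactSupport v) (hdiv : ∀ y, vdiv v y = 0) :
    ∫ y, fderiv ℝ F y (v y) = 0 := by
  have hint : Integrable fun y => fderiv ℝ F y (v y) :=
    ((hF.continuous_fderiv one_ne_zero).clm_apply hv.continuous).integrable_of_hasCompactSupport
      (hvs.mono fun y hy hvy => hy (by simp only [hvy, map_zero]))
  have hcomp (y : Fin d → ℝ) (i : ι) :
      fderiv ℝ F y (v y) i = fderiv ℝ (fun z => F z i) y (v y) := by
    rw [fderiv_apply (hF.differentiable one_ne_zero y) i]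
    rfl
  funext i
  rw [eval_integral hint.eval i]
  simp_rw [hcomp]
  exact integral_fderiv_apply_eq_zero_of_vdiv_eq_zero (contDiff_pi.1 hF i) hv hvs hdiv

theorem integral_adjugate_eq_integral_det_general {d : ℕ}
    (ψ : (Fin d → ℝ) → (Fin d → ℝ)) (hψ : ContDiff ℝ 2 ψ)
    (u : (Fin d → ℝ) → (Fin d → ℝ)) (hu : ContDiff ℝ 1 u)
    (hsupp : HasCompactSupport u)
    (hdivfree : ∀ y : Fin d → ℝ,
      vdiv (fun z => (Matrix.adjugate (jacobian ψ z)).mulVec (u z)) y = 0) :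
    (∫ y, (Matrix.adjugate (jacobian ψ y)).mulVec (u y))
      = ∫ y, (jacobian ψ y).det • u y := by
  set v := fun z => (jacobian ψ z).adjugate *ᵥ u z
  have hv : ContDiff ℝ 1 v := contDiff_mulVec_of_contDiff_entries
    (contDiff_adjugate_apply_of_contDiff_entries (contDiff_jacobian_apply hψ le_rfl)) hu
  have hvs : HasCompactSupport v :=
    hsupp.mono fun y hy huy => hy (by simp only [v, huy, Matrix.mulVec_zero])
  have hdet (y : Fin d → ℝ) : (jacobian ψ y).det • u y = fderiv ℝ ψ y (v y) := by
    rw [← jacobian_mulVec, Matrix.mulVec_mulVec, Matrix.mul_adjugate, Matrix.smul_mulVec,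
      Matrix.one_mulVec]
  calc ∫ y, v y = ∫ y, fderiv ℝ id y (v y) := by
        simp only [fderiv_id, ContinuousLinearMap.id_apply]
    _ = 0 := integral_fderiv_apply_eq_zero_of_vdiv_eq_zero_pi contDiff_id hv hvs hdivfree
    _ = ∫ y, fderiv ℝ ψ y (v y) :=
      (integral_fderiv_apply_eq_zero_of_vdiv_eq_zero_pi (hψ.of_le one_le_two) hv hvs hdivfree).symm
    _ = ∫ y, (jacobian ψ y).det • u y := by simp only [hdet]

/-- **Equality of adjugate-weighted and determinant-weighted averages for divergence-free
transformed fields**: if `ψ : ℝ^d → ℝ^d` is twice continuously differentiable,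
`u : ℝ^d → ℝ^d` is continuously differentiable with compact support, and
`y ↦ Adj(Dψ(y)) u(y)` is divergence-free, then
`∫ Adj(Dψ(y)) u(y) dy = ∫ det(Dψ(y)) u(y) dy`. -/
theorem integral_adjugate_eq_integral_det {d : ℕ} (hd : 1 ≤ d)
    (ψ : (Fin d → ℝ) → (Fin d → ℝ)) (hψ : ContDiff ℝ 2 ψ)
    (u : (Fin d → ℝ) → (Fin d → ℝ)) (hu : ContDiff ℝ 1 u)
    (hsupp : HasCompactSupport u)
    (hdivfree : ∀ y : Fin d → ℝ,
      vdiv (fun z => (Matrix.adjugate (jacobian ψ z)).mulVec (u z)) y = 0) :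
    (∫ y, (Matrix.adjugate (jacobian ψ y)).mulVec (u y))
      = ∫ y, (jacobian ψ y).det • u y :=
  integral_adjugate_eq_integral_det_general ψ hψ u hu hsupp hdivfree
end
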